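/- For 1 < p < ∞ with conjugate exponent q = p/(p-1), for any sequences (a_m)_{m≥2} ∈ ℓ^p and (b_n)_{n≥2} ∈ ℓ^q of nonnegative reals, ∑_{m,n≥2} a_m b_n m^(-1/q) n^(-1/p) / log(mn) ≤ (π/sin(π/p)) ‖a‖_p ‖b‖_q. -/

import Mathlib

/-!
Schur's test for the kernel `K m n = m^(-1/q) n^(-1/p) / log (m n)` with the weight
`h k = (k log k)^(-1/(pq))`: writing `a m * b n * K m n = F * G` with `F = a m K^(1/p) h n / h m`
and `G = b n K^(1/q) h m / h n`, Hölder's inequality on pairs reduces the claim to the row bound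
`∑ n, K m n h n ^ p ≤ C h m ^ p` and its transpose, where `C = π / sin (π/p)`.
For `x = log m` the row sum is `m^(-1/q) ∑ n, n⁻¹ φ (log n)` with the decreasing
`φ u = u^(-1/q) / (x + u)`. Since `1/n ≤ log n - log (n - 1)`, this is a lower Riemann sum of
`∫₀^∞ φ = x^(-1/q) π / sin (π/q)`; the substitution `u = x t / (1 - t)` turns that integral into
the Beta integral `B(1/p, 1/q) = Γ(1/p) Γ(1/q)`.
-/

open Real Set MeasureTheory

section Integral

variable {r : ℝ}

theorem integral_rpow_neg_mul_one_sub_rpow (hr0 : 0 < r) (hr1 : r < 1) :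
    ∫ t in (0 : ℝ)..1, t ^ (-r) * (1 - t) ^ (r - 1) = π / sin (π * r) := by
  have hbeta : Complex.betaIntegral ((1 - r : ℝ) : ℂ) (r : ℂ)
      = ((∫ t in (0 : ℝ)..1, t ^ (-r) * (1 - t) ^ (r - 1) : ℝ) : ℂ) := by
    rw [Complex.betaIntegral, ← intervalIntegral.integral_ofReal]
    refine intervalIntegral.integral_congr fun t ht => ?_
    rw [uIcc_of_le zero_le_one] at ht
    rw [show ((1 - r : ℝ) : ℂ) - 1 = ((-r : ℝ) : ℂ) by push_cast; ring,
      show (r : ℂ) - 1 = ((r - 1 : ℝ) : ℂ) by push_cast; ring,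
      show 1 - (t : ℂ) = ((1 - t : ℝ) : ℂ) by push_cast; ring,
      ← Complex.ofReal_cpow ht.1, ← Complex.ofReal_cpow (by linarith [ht.2] : (0 : ℝ) ≤ 1 - t)]
    push_cast
    ring
  have hGamma := Complex.Gamma_mul_Gamma_eq_betaIntegral
    (s := ((1 - r : ℝ) : ℂ)) (t := (r : ℂ)) (by simpa using hr1) (by simpa using hr0)
  rw [show ((1 - r : ℝ) : ℂ) + r = 1 by push_cast; ring, Complex.Gamma_one, one_mul, hbeta,
    show (r : ℂ) = 1 - ((1 - r : ℝ) : ℂ) by push_cast; ring, Complex.Gamma_mul_Gamma_one_sub,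
    show (π : ℂ) * ((1 - r : ℝ) : ℂ) = π - ((π * r : ℝ) : ℂ) by push_cast; ring,
    Complex.sin_pi_sub, ← Complex.ofReal_sin] at hGamma
  exact_mod_cast hGamma.symm

theorem integral_Ioi_rpow_neg_mul_inv_one_add (hr0 : 0 < r) (hr1 : r < 1) :
    ∫ s in Ioi (0 : ℝ), s ^ (-r) * (1 + s)⁻¹ = π / sin (π * r) := by
  have himg : (fun t : ℝ => t / (1 - t)) '' Ioo 0 1 = Ioi 0 := by
    ext s
    constructor
    · rintro ⟨t, ⟨ht0, ht1⟩, rfl⟩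
      exact div_pos ht0 (by linarith)
    · intro (hs : 0 < s)
      refine ⟨s / (1 + s), ⟨by positivity, (div_lt_one (by linarith)).2 (by linarith)⟩, ?_⟩
      field_simp
      ring
  have hderiv : ∀ t ∈ Ioo (0 : ℝ) 1,
      HasDerivWithinAt (fun t : ℝ => t / (1 - t)) ((1 - t) ^ 2)⁻¹ (Ioo 0 1) t := by
    intro t ht
    have h1t : 1 - t ≠ 0 := by linarith [ht.2]
    have h : HasDerivAt (fun t : ℝ => t / (1 - t)) ((1 * (1 - t) - t * -1) / (1 - t) ^ 2) t :=
      (hasDerivAt_id' t).fun_div ((hasDerivAt_id' t).const_sub 1) h1t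
    exact (h.congr_deriv (by ring)).hasDerivWithinAt
  have hinj : InjOn (fun t : ℝ => t / (1 - t)) (Ioo 0 1) := by
    intro u hu v hv h
    have hu1 : 1 - u ≠ 0 := by linarith [hu.2]
    have hv1 : 1 - v ≠ 0 := by linarith [hv.2]
    field_simp at h
    linarith
  have hintegrand : EqOn
      (fun t : ℝ => |((1 - t) ^ 2)⁻¹| • ((t / (1 - t)) ^ (-r) * (1 + t / (1 - t))⁻¹))
      (fun t : ℝ => t ^ (-r) * (1 - t) ^ (r - 1)) (Ioo 0 1) := by
    intro t ⟨ht0, ht1⟩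
    have h1t : 0 < 1 - t := by linarith
    have : 1 + t / (1 - t) = (1 - t)⁻¹ := by field_simp; ring
    dsimp only
    rw [smul_eq_mul, this, inv_inv, abs_of_nonneg (by positivity), div_rpow ht0.le h1t.le,
      rpow_neg ht0.le, rpow_neg h1t.le, rpow_sub h1t, rpow_one]
    field_simp
  rw [← himg, integral_image_eq_integral_abs_deriv_smul measurableSet_Ioo hderiv hinj,
    setIntegral_congr_fun measurableSet_Ioo hintegrand, ← integral_Ioc_eq_integral_Ioo,
    ← intervalIntegral.integral_of_le zero_le_one]
  exact integral_rpow_neg_mul_one_sub_rpow hr0 hr1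

theorem integral_Ioi_rpow_neg_mul_inv_add (hr0 : 0 < r) (hr1 : r < 1) {x : ℝ} (hx : 0 < x) :
    ∫ u in Ioi (0 : ℝ), u ^ (-r) * (x + u)⁻¹ = π / sin (π * r) * x ^ (-r) := by
  have hscale : ∀ s ∈ Ioi (0 : ℝ),
      (x * s) ^ (-r) * (x + x * s)⁻¹ = x ^ (-r) * x⁻¹ * (s ^ (-r) * (1 + s)⁻¹) := by
    intro s (hs : 0 < s)
    rw [mul_rpow hx.le hs.le, show x + x * s = x * (1 + s) by ring, mul_inv]
    ring
  have h := integral_comp_mul_left_Ioi (fun u => u ^ (-r) * (x + u)⁻¹) 0 hx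
  rw [mul_zero, setIntegral_congr_fun measurableSet_Ioi hscale, integral_const_mul,
    integral_Ioi_rpow_neg_mul_inv_one_add hr0 hr1, smul_eq_mul] at h
  rw [eq_inv_mul_iff_mul_eq₀ hx.ne'] at h
  rw [← h]
  field_simp

end Integral

section LogSum

variable {φ : ℝ → ℝ}

theorem inv_le_log_sub_log_sub_one {y : ℝ} (hy : 1 < y) : y⁻¹ ≤ log y - log (y - 1) := by
  have hy0 : 0 < y - 1 := by linarith
  have h := one_sub_inv_le_log_of_pos (div_pos (by linarith) hy0 : 0 < y / (y - 1))
  rwa [log_div (by linarith) hy0.ne', inv_div, one_sub_div (by linarith), sub_sub_cancel,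
    one_div] at h

theorem intervalIntegrable_of_integrableOn_Ioi_zero (hφ : IntegrableOn φ (Ioi 0)) {a b : ℝ}
    (ha : 0 ≤ a) (hab : a ≤ b) : IntervalIntegrable φ volume a b :=
  (intervalIntegrable_iff_integrableOn_Ioc_of_le hab).2 (hφ.mono_set fun _ hu => ha.trans_lt hu.1)

theorem inv_mul_comp_log_le_integral (anti : AntitoneOn φ (Ioi 0))
    (nonneg : ∀ u ∈ Ioi 0, 0 ≤ φ u) (hφ : IntegrableOn φ (Ioi 0)) {y : ℝ} (hy : 2 ≤ y) :
    y⁻¹ * φ (log y) ≤ ∫ u in log (y - 1)..log y, φ u := by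
  have hlog_pos : 0 < log y := log_pos (by linarith)
  have h0 : 0 ≤ log (y - 1) := log_nonneg (by linarith)
  have hle : log (y - 1) ≤ log y := log_le_log (by linarith) (by linarith)
  calc y⁻¹ * φ (log y) ≤ (log y - log (y - 1)) * φ (log y) :=
        mul_le_mul_of_nonneg_right (inv_le_log_sub_log_sub_one (by linarith))
          (nonneg _ hlog_pos)
    _ = ∫ _ in log (y - 1)..log y, φ (log y) := by rw [intervalIntegral.integral_const, smul_eq_mul]
    _ ≤ ∫ u in log (y - 1)..log y, φ u :=
        intervalIntegral.integral_mono_on_of_le_Ioo hle intervalIntegrable_const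
          (intervalIntegrable_of_integrableOn_Ioi_zero hφ h0 hle)
          fun u hu => anti (h0.trans_lt hu.1) hlog_pos hu.2.le

theorem sum_range_inv_mul_comp_log_le_integral (anti : AntitoneOn φ (Ioi 0))
    (nonneg : ∀ u ∈ Ioi 0, 0 ≤ φ u) (hφ : IntegrableOn φ (Ioi 0)) (N : ℕ) :
    ∑ k ∈ Finset.range N, ((k : ℝ) + 2)⁻¹ * φ (log ((k : ℝ) + 2)) ≤ ∫ u in Ioi 0, φ u := by
  set a : ℕ → ℝ := fun k => log ((k : ℝ) + 1)
  have ha_succ : ∀ k : ℕ, a (k + 1) = log ((k : ℝ) + 2) := fun k => by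
    simp only [a]; push_cast; ring_nf
  have hterm : ∀ k : ℕ, ((k : ℝ) + 2)⁻¹ * φ (log ((k : ℝ) + 2)) ≤ ∫ u in a k..a (k + 1), φ u :=
    fun k => by
      rw [ha_succ]
      convert inv_mul_comp_log_le_integral anti nonneg hφ (y := (k : ℝ) + 2)
        (by linarith [k.cast_nonneg (α := ℝ)])
        using 3
      ring_nf
  calc ∑ k ∈ Finset.range N, ((k : ℝ) + 2)⁻¹ * φ (log ((k : ℝ) + 2))
      ≤ ∑ k ∈ Finset.range N, ∫ u in a k..a (k + 1), φ u := Finset.sum_le_sum fun k _ => hterm k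
    _ = ∫ u in Ioc 0 (a N), φ u := by
        have ha_mono : Monotone a := fun i j hij => by
          simp only [a]; gcongr
        rw [intervalIntegral.sum_integral_adjacent_intervals fun k _ =>
            intervalIntegrable_of_integrableOn_Ioi_zero hφ (by simpa [a] using ha_mono k.zero_le)
              (ha_mono k.le_succ),
          intervalIntegral.integral_of_le (ha_mono N.zero_le)]
        simp [a]
    _ ≤ ∫ u in Ioi 0, φ u :=
        setIntegral_mono_set hφ (ae_restrict_of_forall_mem measurableSet_Ioi nonneg)
          Ioc_subset_Ioi_self.eventuallyLE

def natAddTwoEquiv : ℕ ≃ {k : ℕ // 2 ≤ k} where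
  toFun k := ⟨k + 2, by omega⟩
  invFun n := n - 2
  left_inv k := by simp
  right_inv n := Subtype.ext (by have := n.2; simp; omega)

theorem summable_and_tsum_inv_mul_comp_log_le_integral (anti : AntitoneOn φ (Ioi 0))
    (nonneg : ∀ u ∈ Ioi 0, 0 ≤ φ u) (hφ : IntegrableOn φ (Ioi 0)) :
    Summable (fun n : {k : ℕ // 2 ≤ k} => ((n : ℕ) : ℝ)⁻¹ * φ (log (n : ℕ))) ∧
      ∑' n : {k : ℕ // 2 ≤ k}, ((n : ℕ) : ℝ)⁻¹ * φ (log (n : ℕ)) ≤ ∫ u in Ioi 0, φ u := by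
  rw [← natAddTwoEquiv.summable_iff, ← natAddTwoEquiv.tsum_eq]
  have hterm : ∀ k : ℕ, (((natAddTwoEquiv k : ℕ) : ℝ))⁻¹ * φ (log (natAddTwoEquiv k : ℕ)) =
      ((k : ℝ) + 2)⁻¹ * φ (log ((k : ℝ) + 2)) := fun k => by
    simp [natAddTwoEquiv]
  have hnonneg : ∀ k : ℕ, 0 ≤ ((k : ℝ) + 2)⁻¹ * φ (log ((k : ℝ) + 2)) := fun k =>
    mul_nonneg (by positivity) (nonneg _ (log_pos (by linarith [k.cast_nonneg (α := ℝ)])))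
  simp only [Function.comp_def, hterm]
  exact ⟨summable_of_sum_range_le hnonneg
      (sum_range_inv_mul_comp_log_le_integral anti nonneg hφ),
    tsum_le_of_sum_range_le hnonneg (sum_range_inv_mul_comp_log_le_integral anti nonneg hφ)⟩

end LogSum

section SchurTest

variable {ι κ : Type*}

theorem summable_prod_and_tsum_le_of_nonneg {Φ : ι × κ → ℝ} (hΦ : 0 ≤ Φ)
    (hrow : ∀ m, Summable fun n => Φ (m, n)) {c : ι → ℝ} (hc : ∀ m, ∑' n, Φ (m, n) ≤ c m)
    (hc_sum : Summable c) : Summable Φ ∧ ∑' x, Φ x ≤ ∑' m, c m := by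
  have hrow_sum : Summable fun m => ∑' n, Φ (m, n) :=
    hc_sum.of_nonneg_of_le (fun m => tsum_nonneg fun n => hΦ _) hc
  have hΦ_sum : Summable Φ := (summable_prod_of_nonneg hΦ).2 ⟨hrow, hrow_sum⟩
  exact ⟨hΦ_sum, hΦ_sum.tsum_prod ▸ hrow_sum.tsum_le_tsum hc hc_sum⟩

noncomputable def schurFactor (a : ι → ℝ) (K : ι → κ → ℝ) (f : ι → ℝ) (g : κ → ℝ) (p : ℝ)
    (x : ι × κ) : ℝ :=
  a x.1 * K x.1 x.2 ^ (1 / p) * g x.2 / f x.1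

variable {a : ι → ℝ} {K : ι → κ → ℝ} {f : ι → ℝ} {g : κ → ℝ} {p C : ℝ}

theorem schurFactor_nonneg (ha : ∀ m, 0 ≤ a m) (hK : ∀ m n, 0 ≤ K m n) (hf : ∀ m, 0 < f m)
    (hg : ∀ n, 0 < g n) (x : ι × κ) : 0 ≤ schurFactor a K f g p x := by
  unfold schurFactor
  have := ha x.1; have := hK x.1 x.2; have := hf x.1; have := hg x.2
  positivity

theorem schurFactor_rpow (hp : 0 < p) (ha : ∀ m, 0 ≤ a m) (hK : ∀ m n, 0 ≤ K m n)
    (hf : ∀ m, 0 < f m) (hg : ∀ n, 0 < g n) (m : ι) (n : κ) :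
    schurFactor a K f g p (m, n) ^ p = a m ^ p / f m ^ p * (K m n * g n ^ p) := by
  have hKp : (K m n ^ (1 / p)) ^ p = K m n := by
    rw [one_div, rpow_inv_rpow (hK m n) hp.ne']
  have := ha m; have := hK m n; have := hf m; have := hg n
  rw [schurFactor, div_rpow (by positivity) (hf m).le, mul_rpow (by positivity) (hg n).le,
    mul_rpow (ha m) (by positivity), hKp]
  ring

theorem schurFactor_mul_schurFactor_swap {q : ℝ} (hpq : p.HolderConjugate q) {b : κ → ℝ}
    (hK : ∀ m n, 0 ≤ K m n) (hf : ∀ m, 0 < f m) (hg : ∀ n, 0 < g n) (m : ι) (n : κ) :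
    schurFactor a K f g p (m, n) * schurFactor b (flip K) g f q (n, m) = a m * b n * K m n := by
  have hpq' : 1 / p + 1 / q = 1 := by rw [one_div, one_div, hpq.inv_add_inv_eq_one]
  have hK' : K m n ^ (1 / p) * K m n ^ (1 / q) = K m n := by
    rw [← rpow_add' (hK m n) (by rw [hpq']; norm_num), hpq', rpow_one]
  calc schurFactor a K f g p (m, n) * schurFactor b (flip K) g f q (n, m)
      = a m * b n * (K m n ^ (1 / p) * K m n ^ (1 / q)) * (f m / f m) * (g n / g n) := by
        simp only [schurFactor, flip]; ring
    _ = a m * b n * K m n := by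
        rw [hK', div_self (hf m).ne', div_self (hg n).ne', mul_one, mul_one]

theorem summable_and_tsum_schurFactor_rpow_le (hp : 0 < p) (ha : ∀ m, 0 ≤ a m)
    (hK : ∀ m n, 0 ≤ K m n) (hf : ∀ m, 0 < f m) (hg : ∀ n, 0 < g n)
    (hrow : ∀ m, Summable (fun n => K m n * g n ^ p) ∧ ∑' n, K m n * g n ^ p ≤ C * f m ^ p)
    (ha_sum : Summable fun m => a m ^ p) :
    Summable (fun x => schurFactor a K f g p x ^ p) ∧
      ∑' x, schurFactor a K f g p x ^ p ≤ ∑' m, C * a m ^ p := by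
  refine summable_prod_and_tsum_le_of_nonneg
    (fun x => rpow_nonneg (schurFactor_nonneg ha hK hf hg x) p)
    (fun m => ?_) (fun m => ?_) (ha_sum.mul_left C)
  · simp_rw [schurFactor_rpow hp ha hK hf hg]
    exact (hrow m).1.mul_left _
  · have hfp : 0 < f m ^ p := rpow_pos_of_pos (hf m) p
    simp_rw [schurFactor_rpow hp ha hK hf hg, tsum_mul_left]
    calc a m ^ p / f m ^ p * ∑' n, K m n * g n ^ p ≤ a m ^ p / f m ^ p * (C * f m ^ p) := by
          gcongr
          · exact div_nonneg (rpow_nonneg (ha m) p) hfp.le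
          · exact (hrow m).2
      _ = C * a m ^ p := by field_simp

theorem tsum_tsum_mul_le_of_schur_test {q : ℝ} (hpq : p.HolderConjugate q) (hC : 0 ≤ C)
    (hK : ∀ m n, 0 ≤ K m n) (hf : ∀ m, 0 < f m) (hg : ∀ n, 0 < g n)
    (hrow : ∀ m, Summable (fun n => K m n * g n ^ p) ∧ ∑' n, K m n * g n ^ p ≤ C * f m ^ p)
    (hcol : ∀ n, Summable (fun m => K m n * f m ^ q) ∧ ∑' m, K m n * f m ^ q ≤ C * g n ^ q)
    {b : κ → ℝ} (ha : ∀ m, 0 ≤ a m) (hb : ∀ n, 0 ≤ b n)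
    (ha_sum : Summable fun m => a m ^ p) (hb_sum : Summable fun n => b n ^ q) :
    ∑' m, ∑' n, a m * b n * K m n ≤
      C * (∑' m, a m ^ p) ^ (1 / p) * (∑' n, b n ^ q) ^ (1 / q) := by
  have hpq' : 1 / p + 1 / q = 1 := by rw [one_div, one_div, hpq.inv_add_inv_eq_one]
  set F := schurFactor a K f g p
  set G := fun x : ι × κ => schurFactor b (flip K) g f q x.swap
  obtain ⟨hF_sum, hF_le⟩ :=
    summable_and_tsum_schurFactor_rpow_le hpq.pos ha hK hf hg hrow ha_sum
  obtain ⟨hG_sum, hG_le⟩ :=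
    summable_and_tsum_schurFactor_rpow_le hpq.symm.pos hb (fun n m => hK m n) hg hf hcol hb_sum
  rw [← (Equiv.prodComm ι κ).summable_iff] at hG_sum
  rw [← (Equiv.prodComm ι κ).tsum_eq] at hG_le
  have hF0 : ∀ x, 0 ≤ F x := schurFactor_nonneg ha hK hf hg
  have hG0 : ∀ x, 0 ≤ G x := fun x => schurFactor_nonneg hb (fun n m => hK m n) hg hf x.swap
  obtain ⟨hFG_sum, hFG_le⟩ := summable_and_inner_le_Lp_mul_Lq_tsum_of_nonneg hpq hF0 hG0
    hF_sum hG_sum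
  calc ∑' m, ∑' n, a m * b n * K m n = ∑' x, F x * G x := by
        rw [hFG_sum.tsum_prod]
        exact tsum_congr fun m => tsum_congr fun n =>
          (schurFactor_mul_schurFactor_swap hpq hK hf hg m n).symm
    _ ≤ (∑' x, F x ^ p) ^ (1 / p) * (∑' x, G x ^ q) ^ (1 / q) := hFG_le
    _ ≤ (∑' m, C * a m ^ p) ^ (1 / p) * (∑' n, C * b n ^ q) ^ (1 / q) := by
        have : 0 ≤ ∑' x, F x ^ p := tsum_nonneg fun x => rpow_nonneg (hF0 x) p
        have : 0 ≤ ∑' x, G x ^ q := tsum_nonneg fun x => rpow_nonneg (hG0 x) q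
        have := hpq.pos; have := hpq.symm.pos
        gcongr
        · exact rpow_nonneg (tsum_nonneg fun m => mul_nonneg hC (rpow_nonneg (ha m) p)) _
        · exact hG_le
    _ = C * (∑' m, a m ^ p) ^ (1 / p) * (∑' n, b n ^ q) ^ (1 / q) := by
        rw [tsum_mul_left, tsum_mul_left,
          mul_rpow hC (tsum_nonneg fun m => rpow_nonneg (ha m) p),
          mul_rpow hC (tsum_nonneg fun n => rpow_nonneg (hb n) q), mul_mul_mul_comm,
          ← rpow_add' hC (by rw [hpq']; norm_num), hpq', rpow_one, mul_assoc]

end SchurTest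

section LogKernel

noncomputable def logKernel (r s : ℝ) (m n : ℕ) : ℝ :=
  (m : ℝ) ^ (-r) * (n : ℝ) ^ (-s) / (log m + log n)

noncomputable def logWeight (t : ℝ) (k : ℕ) : ℝ :=
  ((k : ℝ) * log k) ^ (-t)

theorem logKernel_comm (r s : ℝ) (m n : ℕ) : logKernel r s m n = logKernel s r n m := by
  rw [logKernel, logKernel, add_comm (log m)]
  ring

theorem log_pos_of_two_le (n : {k : ℕ // 2 ≤ k}) : 0 < log (n : ℕ) :=
  log_pos (by exact_mod_cast n.2)

theorem logKernel_nonneg (r s : ℝ) (m n : {k : ℕ // 2 ≤ k}) : 0 ≤ logKernel r s m n := by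
  have := log_pos_of_two_le m; have := log_pos_of_two_le n
  unfold logKernel
  positivity

theorem logWeight_pos (t : ℝ) (k : {k : ℕ // 2 ≤ k}) : 0 < logWeight t k := by
  have := log_pos_of_two_le k; have := k.2
  unfold logWeight
  positivity

theorem logWeight_rpow (t x : ℝ) (k : ℕ) : logWeight t k ^ x = logWeight (t * x) k := by
  rw [logWeight, logWeight, ← rpow_mul (mul_nonneg k.cast_nonneg (log_natCast_nonneg k)),
    neg_mul]

theorem summable_and_tsum_logKernel_mul_logWeight_le {r s : ℝ} (hr : 0 < r) (hs : 0 < s)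
    (hrs : r + s = 1) (m : {k : ℕ // 2 ≤ k}) :
    Summable (fun n : {k : ℕ // 2 ≤ k} => logKernel r s m n * logWeight r n) ∧
      ∑' n : {k : ℕ // 2 ≤ k}, logKernel r s m n * logWeight r n ≤
        π / sin (π * r) * logWeight r m := by
  set x := log (m : ℕ)
  have hx : 0 < x := log_pos_of_two_le m
  set φ : ℝ → ℝ := fun u => u ^ (-r) * (x + u)⁻¹
  have hsin : 0 < sin (π * r) :=
    sin_pos_of_pos_of_lt_pi (by positivity) (by nlinarith [pi_pos])
  have hφ_int : ∫ u in Ioi 0, φ u = π / sin (π * r) * x ^ (-r) :=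
    integral_Ioi_rpow_neg_mul_inv_add hr (by linarith) hx
  -- a non-integrable function would have integral `0`
  have hφ : IntegrableOn φ (Ioi 0) :=
    .of_integral_ne_zero (by rw [hφ_int]; positivity)
  have anti : AntitoneOn φ (Ioi 0) := fun u (hu : 0 < u) v (hv : 0 < v) huv =>
    mul_le_mul (antitoneOn_rpow_Ioi_of_exponent_nonpos (by linarith) hu hv huv)
      (inv_anti₀ (by positivity) (by linarith)) (by positivity) (by positivity)
  have nonneg : ∀ u ∈ Ioi 0, 0 ≤ φ u := fun u (hu : 0 < u) => by positivity
  obtain ⟨hsum, hle⟩ := summable_and_tsum_inv_mul_comp_log_le_integral anti nonneg hφ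
  have hterm : ∀ n : {k : ℕ // 2 ≤ k}, logKernel r s m n * logWeight r n =
      ((m : ℕ) : ℝ) ^ (-r) * (((n : ℕ) : ℝ)⁻¹ * φ (log (n : ℕ))) := fun n => by
    have hn : (0 : ℝ) < (n : ℕ) := by have := n.2; positivity
    have hpow : ((n : ℕ) : ℝ) ^ (-s) * ((n : ℕ) : ℝ) ^ (-r) = ((n : ℕ) : ℝ)⁻¹ := by
      rw [← rpow_add hn, show -s + -r = -1 by linarith, rpow_neg_one]
    rw [logKernel, logWeight, mul_rpow hn.le (log_pos_of_two_le n).le]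
    simp only [φ, x]
    linear_combination (((m : ℕ) : ℝ) ^ (-r) * log (n : ℕ) ^ (-r) *
      (log (m : ℕ) + log (n : ℕ))⁻¹) * hpow
  simp_rw [hterm, tsum_mul_left]
  refine ⟨hsum.mul_left _, ?_⟩
  calc ((m : ℕ) : ℝ) ^ (-r) * ∑' n : {k : ℕ // 2 ≤ k}, ((n : ℕ) : ℝ)⁻¹ * φ (log (n : ℕ))
      ≤ ((m : ℕ) : ℝ) ^ (-r) * (π / sin (π * r) * x ^ (-r)) := by
        gcongr
        exact hφ_int ▸ hle
    _ = π / sin (π * r) * logWeight r m := by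
        rw [logWeight, mul_rpow (Nat.cast_nonneg _) hx.le]
        ring

theorem summable_and_tsum_logKernel_mul_logWeight_rpow_le {p q : ℝ} (hpq : p.HolderConjugate q)
    (m : {k : ℕ // 2 ≤ k}) :
    Summable (fun n : {k : ℕ // 2 ≤ k} =>
        logKernel (1 / q) (1 / p) m n * logWeight (1 / (p * q)) n ^ p) ∧
      ∑' n : {k : ℕ // 2 ≤ k}, logKernel (1 / q) (1 / p) m n * logWeight (1 / (p * q)) n ^ p ≤
        π / sin (π / q) * logWeight (1 / (p * q)) m ^ p := by
  have hp := hpq.pos; have hq := hpq.symm.pos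
  have hpq' : 1 / q + 1 / p = 1 := by rw [one_div, one_div, add_comm, hpq.inv_add_inv_eq_one]
  simp only [logWeight_rpow, show 1 / (p * q) * p = 1 / q by field_simp, ← mul_one_div π q]
  exact summable_and_tsum_logKernel_mul_logWeight_le (by positivity) (by positivity) hpq' m

end LogKernel

theorem stmt_3 (p : ℝ) (hp : 1 < p) (q : ℝ) (hq : q = p / (p - 1))
    (a b : {k : ℕ // 2 ≤ k} → ℝ)
    (hanneg : ∀ m, 0 ≤ a m) (hbnneg : ∀ n, 0 ≤ b n)
    (ha : Summable fun m => a m ^ p) (hb : Summable fun n => b n ^ q) :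
    ∑' m : {k : ℕ // 2 ≤ k}, ∑' n : {k : ℕ // 2 ≤ k},
        a m * b n * ((m : ℕ) : ℝ) ^ (-(1/q)) * ((n : ℕ) : ℝ) ^ (-(1/p))
          / (Real.log (m : ℕ) + Real.log (n : ℕ))
      ≤ (π / Real.sin (π / p)) * (∑' m, a m ^ p) ^ (1/p) * (∑' n, b n ^ q) ^ (1/q) := by
  have hpq : p.HolderConjugate q := (holderConjugate_iff_eq_conjExponent hp).2 hq
  have hsin_pos : 0 < sin (π / p) :=
    sin_pos_of_pos_of_lt_pi (div_pos pi_pos hpq.pos) (div_lt_self pi_pos hp)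
  have hsin : sin (π / q) = sin (π / p) := by
    rw [← sin_pi_sub]
    congr 1
    rw [div_eq_mul_inv, div_eq_mul_inv]
    linear_combination -π * hpq.inv_add_inv_eq_one
  have hrow := summable_and_tsum_logKernel_mul_logWeight_rpow_le hpq
  rw [hsin] at hrow
  have hcol := summable_and_tsum_logKernel_mul_logWeight_rpow_le hpq.symm
  simp only [mul_comm q p, logKernel_comm (1 / p)] at hcol
  convert tsum_tsum_mul_le_of_schur_test hpq (div_pos pi_pos hsin_pos).le (logKernel_nonneg _ _)
    (logWeight_pos _) (logWeight_pos _) hrow hcol hanneg hbnneg ha hb using 5 with m n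
  rw [logKernel]
  ring
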